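/- Let k be a field of characteristic zero, R = MvPolynomial σ k for a finite type σ, I an ideal of R, b ≥ 1, and m a k-rational maximal ideal of R with I ⊆ m^b. Define T = Δ^{b−1}(I) and the homogenized ideal H(I, b) = I + Δ(I)·T + Δ^2(I)·T^2 + ⋯ + Δ^{b−1}(I)·T^{b−1}. Then H(I, b) ⊆ m^b. -/

import Mathlib

open MvPolynomial

/-- The derivative extension `Δ(I) = I + (∂f/∂X_i : f ∈ I, i)` of an ideal of a
multivariate polynomial ring. -/
noncomputable def deltaIdeal {k : Type*} [Field k] {σ : Type*} [Fintype σ]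
    (I : Ideal (MvPolynomial σ k)) : Ideal (MvPolynomial σ k) :=
  I ⊔ Ideal.span {g | ∃ f ∈ I, ∃ i : σ, g = pderiv i f}

/-! Each derivative lowers the order of vanishing along `m` by at most one, so `Δ^i(I) ⊆ m^(b-i)`;
in particular `T = Δ^(b-1)(I) ⊆ m`, and the `i`-th summand of `H(I, b)` lies in `m^(b-i) · m^i`. -/

theorem Derivation.map_mem_pow_of_mem_pow_succ {R A : Type*} [CommSemiring R] [CommRing A]
    [Algebra R A] (D : Derivation R A A) (J : Ideal A) (n : ℕ) {f : A}
    (hf : f ∈ J ^ (n + 1)) : D f ∈ J ^ n := by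
  induction n generalizing f with
  | zero => simp
  | succ n ih =>
    rw [pow_succ'] at hf
    refine Submodule.mul_induction_on hf (fun x hx y hy => ?_) (fun x y hx hy => ?_)
    · rw [D.leibniz, smul_eq_mul, smul_eq_mul]
      refine Ideal.add_mem _ ?_ (Ideal.mul_mem_right _ _ hy)
      rw [pow_succ']
      exact Ideal.mul_mem_mul hx (ih hy)
    · rw [map_add]
      exact Ideal.add_mem _ hx hy

section deltaIdeal

variable {k σ : Type*} [Field k] [Fintype σ]

theorem deltaIdeal_le_pow_of_le_pow_succ {I m : Ideal (MvPolynomial σ k)} {n : ℕ}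
    (hI : I ≤ m ^ (n + 1)) : deltaIdeal I ≤ m ^ n := by
  refine sup_le (hI.trans (Ideal.pow_le_pow_right n.le_succ)) ?_
  rw [Ideal.span_le]
  rintro g ⟨f, hf, i, rfl⟩
  exact (pderiv i).map_mem_pow_of_mem_pow_succ m n (hI hf)

theorem iterate_deltaIdeal_le_pow_sub {I m : Ideal (MvPolynomial σ k)} {b : ℕ}
    (hI : I ≤ m ^ b) (i : ℕ) : deltaIdeal^[i] I ≤ m ^ (b - i) := by
  induction i with
  | zero => simpa using hI
  | succ i ih =>
    rw [Function.iterate_succ_apply']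
    obtain hbi | hbi := le_or_gt b i
    · simp [Nat.sub_eq_zero_of_le (hbi.trans i.le_succ)]
    · rw [show b - i = b - (i + 1) + 1 by omega] at ih
      exact deltaIdeal_le_pow_of_le_pow_succ ih

end deltaIdeal

theorem homogenized_ideal_le_pow_general
    {k : Type*} [Field k] {σ : Type*} [Fintype σ]
    (I : Ideal (MvPolynomial σ k)) (b : ℕ) (a : σ → k)
    (hI : I ≤ (Ideal.span (Set.range fun i : σ => X i - C (a i))) ^ b) :
    (∑ i ∈ Finset.range b, (deltaIdeal)^[i] I * ((deltaIdeal)^[b - 1] I) ^ i) ≤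
      (Ideal.span (Set.range fun i : σ => X i - C (a i))) ^ b := by
  set m := Ideal.span (Set.range fun i : σ => X i - C (a i))
  rw [Ideal.sum_eq_sup]
  refine Finset.sup_le fun i hi => ?_
  have hib : i < b := Finset.mem_range.mp hi
  have hT : deltaIdeal^[b - 1] I ≤ m := by
    simpa [show b - (b - 1) = 1 by omega] using iterate_deltaIdeal_le_pow_sub hI (b - 1)
  calc deltaIdeal^[i] I * (deltaIdeal^[b - 1] I) ^ i
      ≤ m ^ (b - i) * m ^ i :=
        Ideal.mul_mono (iterate_deltaIdeal_le_pow_sub hI i) (Ideal.pow_right_mono hT i)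
    _ = m ^ b := by rw [← pow_add, Nat.sub_add_cancel hib.le]

/-- if `I ⊆ m^b` at a rational point, then the homogenized ideal
`H(I, b) = Σ_{i<b} Δ^i(I)·T^i` (with `T = Δ^{b−1}(I)`) is also contained in `m^b`. -/
theorem homogenized_ideal_le_pow
    {k : Type*} [Field k] [CharZero k] {σ : Type*} [Fintype σ]
    (I : Ideal (MvPolynomial σ k)) (b : ℕ) (hb : 1 ≤ b) (a : σ → k)
    (hI : I ≤ (Ideal.span (Set.range fun i : σ => X i - C (a i))) ^ b) :
    (∑ i ∈ Finset.range b, (deltaIdeal)^[i] I * ((deltaIdeal)^[b - 1] I) ^ i) ≤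
      (Ideal.span (Set.range fun i : σ => X i - C (a i))) ^ b :=
  homogenized_ideal_le_pow_general I b a hI
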